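/- arXiv:1407.2599 — 15 statements merged into one kernel-verified Lean document; each statement's English description precedes it below -/
import Mathlib

section
/- Fix constants a_i with 0 < a_i ≤ 1 (i = 1,…,m) and b_r with b_r ≥ 1 (r = 1,…,s), and let DMU_p have input vector (a_1 x_{1o},…,a_m x_{mo}) and output vector (b_1 y_{1o},…,b_s y_{so}), evaluated against the same reference set J. Then every point of the GDSE feasible set F_p(g) for DMU_p belongs to the GDSE feasible set F_o(g) for DMU_o; consequently, if the set of fractional-objective values over the points of F_o(g) with positive denominator is nonempty and bounded below, and F_p(g) contains a point with positive denominator, then ρ_o^F(g) ≤ ρ_p^F(g). -/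
open Finset

/-- GDSE feasible-set predicate: the evaluated DMU has input vector `u` and output
vector `v`, benchmarked against the reference set `J = univ \ {o}` of the data
`x`, `y`, with RTS bounds `L ≤ Σλ ≤ U` and direction `(gm, gp)`. -/
def GDSEFeas {n m s : ℕ} (x : Fin n → Fin m → ℝ) (y : Fin n → Fin s → ℝ)
    (o : Fin n) (L U : ℝ) (gm : Fin m → ℝ) (gp : Fin s → ℝ)
    (u : Fin m → ℝ) (v : Fin s → ℝ)
    (lam : Fin n → ℝ) (tm : Fin m → ℝ) (tp : Fin s → ℝ) : Prop :=
  (∀ j ∈ Finset.univ.erase o, 0 ≤ lam j) ∧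
  (∀ i, 0 ≤ tm i) ∧ (∀ r, 0 ≤ tp r) ∧
  (∀ i, ∑ j ∈ Finset.univ.erase o, lam j * x j i ≤ u i + tm i * gm i) ∧
  (∀ r, v r - tp r * gp r ≤ ∑ j ∈ Finset.univ.erase o, lam j * y j r) ∧
  L ≤ ∑ j ∈ Finset.univ.erase o, lam j ∧
  ∑ j ∈ Finset.univ.erase o, lam j ≤ U

/-- The linear objective ℓ(τ⁻, τ⁺) = (1/m) Σᵢ τᵢ⁻ + (1/s) Σᵣ τᵣ⁺. -/
noncomputable def linObj (m s : ℕ) (tm : Fin m → ℝ) (tp : Fin s → ℝ) : ℝ :=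
  (1 / (m : ℝ)) * ∑ i, tm i + (1 / (s : ℝ)) * ∑ r, tp r

/-- The fractional objective f(τ⁻, τ⁺) = (1 + (1/m) Σᵢ τᵢ⁻) / (1 - (1/s) Σᵣ τᵣ⁺). -/
noncomputable def fracObj (m s : ℕ) (tm : Fin m → ℝ) (tp : Fin s → ℝ) : ℝ :=
  (1 + (1 / (m : ℝ)) * ∑ i, tm i) / (1 - (1 / (s : ℝ)) * ∑ r, tp r)

/-- The denominator of the fractional objective. -/
noncomputable def fracDen (s : ℕ) (tp : Fin s → ℝ) : ℝ :=
  1 - (1 / (s : ℝ)) * ∑ r, tp r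

/-- Values of the fractional objective over the feasible points with positive denominator. -/
def fracVals {n m s : ℕ} (x : Fin n → Fin m → ℝ) (y : Fin n → Fin s → ℝ)
    (o : Fin n) (L U : ℝ) (gm : Fin m → ℝ) (gp : Fin s → ℝ)
    (u : Fin m → ℝ) (v : Fin s → ℝ) : Set ℝ :=
  {w : ℝ | ∃ (lam : Fin n → ℝ) (tm : Fin m → ℝ) (tp : Fin s → ℝ),
    GDSEFeas x y o L U gm gp u v lam tm tp ∧ 0 < fracDen s tp ∧
    w = fracObj m s tm tp}

/-- Values of the linear objective over the feasible points. -/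
def linVals {n m s : ℕ} (x : Fin n → Fin m → ℝ) (y : Fin n → Fin s → ℝ)
    (o : Fin n) (L U : ℝ) (gm : Fin m → ℝ) (gp : Fin s → ℝ)
    (u : Fin m → ℝ) (v : Fin s → ℝ) : Set ℝ :=
  {w : ℝ | ∃ (lam : Fin n → ℝ) (tm : Fin m → ℝ) (tp : Fin s → ℝ),
    GDSEFeas x y o L U gm gp u v lam tm tp ∧ w = linObj m s tm tp}

/-- with 0 < aᵢ ≤ 1 and bᵣ ≥ 1, every point of F_p(g) (for the DMU
with inputs aᵢ x_{io} and outputs bᵣ y_{ro}) lies in F_o(g); consequently, if the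
set of fractional values over F_o(g) (positive denominator) is nonempty and
bounded below and F_p(g) has a point with positive denominator, then
ρ_o^F(g) ≤ ρ_p^F(g). -/
theorem stmt1 {n m s : ℕ}
    (x : Fin n → Fin m → ℝ) (y : Fin n → Fin s → ℝ) (o : Fin n)
    (hx : ∀ j i, 0 ≤ x j i) (hy : ∀ j r, 0 ≤ y j r)
    (L U : ℝ) (hL0 : 0 ≤ L) (hL1 : L ≤ 1) (hU : 1 ≤ U)
    (gm : Fin m → ℝ) (gp : Fin s → ℝ)
    (hgm : ∀ i, 0 ≤ gm i) (hgp : ∀ r, 0 ≤ gp r)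
    (a : Fin m → ℝ) (b : Fin s → ℝ)
    (ha0 : ∀ i, 0 < a i) (ha1 : ∀ i, a i ≤ 1) (hb : ∀ r, 1 ≤ b r) :
    (∀ (lam : Fin n → ℝ) (tm : Fin m → ℝ) (tp : Fin s → ℝ),
      GDSEFeas x y o L U gm gp (fun i => a i * x o i) (fun r => b r * y o r) lam tm tp →
      GDSEFeas x y o L U gm gp (x o) (y o) lam tm tp) ∧
    ((fracVals x y o L U gm gp (x o) (y o)).Nonempty →
      BddBelow (fracVals x y o L U gm gp (x o) (y o)) →
      (∃ (lam : Fin n → ℝ) (tm : Fin m → ℝ) (tp : Fin s → ℝ),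
        GDSEFeas x y o L U gm gp (fun i => a i * x o i) (fun r => b r * y o r) lam tm tp ∧
        0 < fracDen s tp) →
      sInf (fracVals x y o L U gm gp (x o) (y o)) ≤
        sInf (fracVals x y o L U gm gp (fun i => a i * x o i) (fun r => b r * y o r))) := by
  have key : ∀ (lam : Fin n → ℝ) (tm : Fin m → ℝ) (tp : Fin s → ℝ),
      GDSEFeas x y o L U gm gp (fun i => a i * x o i) (fun r => b r * y o r) lam tm tp →
      GDSEFeas x y o L U gm gp (x o) (y o) lam tm tp := by
    intro lam tm tp ⟨h1, h2, h3, h4, h5, h6, h7⟩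
    refine ⟨h1, h2, h3, ?_, ?_, h6, h7⟩
    · intro i
      have : a i * x o i ≤ x o i := by
        nlinarith [hx o i, ha1 i]
      have := h4 i
      simp only at this
      linarith
    · intro r
      have : y o r ≤ b r * y o r := by
        nlinarith [hy o r, hb r]
      have := h5 r
      simp only at this
      linarith
  refine ⟨key, fun _ hbdd hne => ?_⟩
  apply csInf_le_csInf hbdd
  · obtain ⟨lam, tm, tp, hf, hd⟩ := hne
    exact ⟨_, lam, tm, tp, hf, hd, rfl⟩
  · rintro w ⟨lam, tm, tp, hf, hd, rfl⟩
    exact ⟨lam, tm, tp, key lam tm tp hf, hd, rfl⟩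
end

section
/- Fix constants a_i with 0 < a_i ≤ 1 (i = 1,…,m) and b_r with b_r ≥ 1 (r = 1,…,s), and let DMU_p have input vector (a_1 x_{1o},…,a_m x_{mo}) and output vector (b_1 y_{1o},…,b_s y_{so}), evaluated against the same reference set J. If the GDSE feasible set F_p(g) is nonempty, then the infimum of the linear objective ℓ over F_o(g) is less than or equal to the infimum of ℓ over F_p(g). -/
open Finset

/-- with 0 < aᵢ ≤ 1 and bᵣ ≥ 1, if F_p(g) is nonempty then the
infimum of the linear objective over F_o(g) is at most that over F_p(g). -/
theorem stmt2 {n m s : ℕ}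
    (x : Fin n → Fin m → ℝ) (y : Fin n → Fin s → ℝ) (o : Fin n)
    (hx : ∀ j i, 0 ≤ x j i) (hy : ∀ j r, 0 ≤ y j r)
    (L U : ℝ) (hL0 : 0 ≤ L) (hL1 : L ≤ 1) (hU : 1 ≤ U)
    (gm : Fin m → ℝ) (gp : Fin s → ℝ)
    (hgm : ∀ i, 0 ≤ gm i) (hgp : ∀ r, 0 ≤ gp r)
    (a : Fin m → ℝ) (b : Fin s → ℝ)
    (ha0 : ∀ i, 0 < a i) (ha1 : ∀ i, a i ≤ 1) (hb : ∀ r, 1 ≤ b r)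
    (hFp : ∃ (lam : Fin n → ℝ) (tm : Fin m → ℝ) (tp : Fin s → ℝ),
      GDSEFeas x y o L U gm gp (fun i => a i * x o i) (fun r => b r * y o r) lam tm tp) :
    sInf (linVals x y o L U gm gp (x o) (y o)) ≤
      sInf (linVals x y o L U gm gp (fun i => a i * x o i) (fun r => b r * y o r)) := by
  have hsub : linVals x y o L U gm gp (fun i => a i * x o i) (fun r => b r * y o r) ⊆
      linVals x y o L U gm gp (x o) (y o) := by
    rintro w ⟨lam, tm, tp, ⟨h1, h2, h3, h4, h5, h6, h7⟩, hw⟩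
    refine ⟨lam, tm, tp, ⟨h1, h2, h3, ?_, ?_, h6, h7⟩, hw⟩
    · intro i
      refine (h4 i).trans (by dsimp only; nlinarith [ha0 i, ha1 i, hx o i])
    · intro r
      refine le_trans ?_ (h5 r)
      dsimp only; have := hb r; have := hy o r; nlinarith
  have hbdd : BddBelow (linVals x y o L U gm gp (x o) (y o)) := by
    refine ⟨0, ?_⟩
    rintro w ⟨lam, tm, tp, ⟨h1, h2, h3, _⟩, rfl⟩
    unfold linObj
    have h1' : 0 ≤ (1 / (m : ℝ)) * ∑ i, tm i :=
      mul_nonneg (by positivity) (Finset.sum_nonneg fun i _ => h2 i)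
    have h2' : 0 ≤ (1 / (s : ℝ)) * ∑ r, tp r :=
      mul_nonneg (by positivity) (Finset.sum_nonneg fun r _ => h3 r)
    linarith
  have hne : (linVals x y o L U gm gp (fun i => a i * x o i) (fun r => b r * y o r)).Nonempty := by
    obtain ⟨lam, tm, tp, h⟩ := hFp
    exact ⟨_, lam, tm, tp, h, rfl⟩
  exact csInf_le_csInf hbdd hne hsub
end

section
/- Fix positive constants c_i (i = 1,…,m) and d_r (r = 1,…,s), and define transformed data x'_{ij} = c_i x_{ij}, y'_{rj} = d_r y_{rj} for all j, and the transformed direction g'_i⁻ = c_i g_i⁻, g'_r⁺ = d_r g_r⁺. Then a triple (λ, τ⁻, τ⁺) belongs to the GDSE feasible set F_o(g) for the original data if and only if it belongs to the GDSE feasible set for the transformed data with direction g'; consequently the infimum of the fractional objective f over the feasible points with positive denominator is the same for the original and the transformed problems (unit invariance of ρ_o^F). -/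
open Finset

theorem gdseFeas_rescale_iff {n m s : ℕ}
    (x : Fin n → Fin m → ℝ) (y : Fin n → Fin s → ℝ) (o : Fin n) (L U : ℝ)
    (gm : Fin m → ℝ) (gp : Fin s → ℝ) (u : Fin m → ℝ) (v : Fin s → ℝ)
    {c : Fin m → ℝ} {d : Fin s → ℝ} (hc : ∀ i, 0 < c i) (hd : ∀ r, 0 < d r)
    (lam : Fin n → ℝ) (tm : Fin m → ℝ) (tp : Fin s → ℝ) :
    GDSEFeas (fun j i => c i * x j i) (fun j r => d r * y j r) o L U
        (fun i => c i * gm i) (fun r => d r * gp r)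
        (fun i => c i * u i) (fun r => d r * v r) lam tm tp ↔
      GDSEFeas x y o L U gm gp u v lam tm tp := by
  have hinput : ∀ i, ∑ j ∈ univ.erase o, lam j * (c i * x j i) ≤
      c i * u i + tm i * (c i * gm i) ↔
      ∑ j ∈ univ.erase o, lam j * x j i ≤ u i + tm i * gm i := fun i => by
    simp only [mul_left_comm _ (c i), ← mul_sum, ← mul_add, mul_le_mul_iff_right₀ (hc i)]
  have houtput : ∀ r, d r * v r - tp r * (d r * gp r) ≤
      ∑ j ∈ univ.erase o, lam j * (d r * y j r) ↔
      v r - tp r * gp r ≤ ∑ j ∈ univ.erase o, lam j * y j r := fun r => by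
    simp only [mul_left_comm _ (d r), ← mul_sum, ← mul_sub, mul_le_mul_iff_right₀ (hd r)]
  simp only [GDSEFeas, hinput, houtput]

theorem fracVals_congr {n m s : ℕ}
    {x x' : Fin n → Fin m → ℝ} {y y' : Fin n → Fin s → ℝ} {o : Fin n} {L U : ℝ}
    {gm gm' : Fin m → ℝ} {gp gp' : Fin s → ℝ} {u u' : Fin m → ℝ} {v v' : Fin s → ℝ}
    (h : ∀ lam tm tp, GDSEFeas x y o L U gm gp u v lam tm tp ↔
      GDSEFeas x' y' o L U gm' gp' u' v' lam tm tp) :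
    fracVals x y o L U gm gp u v = fracVals x' y' o L U gm' gp' u' v' := by
  ext w
  simp only [fracVals, Set.mem_ofPred_eq, h]

theorem stmt3_general {n m s : ℕ}
    (x : Fin n → Fin m → ℝ) (y : Fin n → Fin s → ℝ) (o : Fin n)
    (L U : ℝ)
    (gm : Fin m → ℝ) (gp : Fin s → ℝ)
    (c : Fin m → ℝ) (d : Fin s → ℝ) (hc : ∀ i, 0 < c i) (hd : ∀ r, 0 < d r) :
    (∀ (lam : Fin n → ℝ) (tm : Fin m → ℝ) (tp : Fin s → ℝ),
      GDSEFeas x y o L U gm gp (x o) (y o) lam tm tp ↔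
      GDSEFeas (fun j i => c i * x j i) (fun j r => d r * y j r) o L U
        (fun i => c i * gm i) (fun r => d r * gp r)
        (fun i => c i * x o i) (fun r => d r * y o r) lam tm tp) ∧
    sInf (fracVals x y o L U gm gp (x o) (y o)) =
      sInf (fracVals (fun j i => c i * x j i) (fun j r => d r * y j r) o L U
        (fun i => c i * gm i) (fun r => d r * gp r)
        (fun i => c i * x o i) (fun r => d r * y o r)) := by
  have hfeas := fun lam tm tp =>
    (gdseFeas_rescale_iff x y o L U gm gp (x o) (y o) hc hd lam tm tp).symm
  exact ⟨hfeas, congrArg sInf (fracVals_congr hfeas)⟩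

/-- unit invariance of ρ_o^F. With cᵢ, dᵣ > 0 and transformed data
x'_{ij} = cᵢ x_{ij}, y'_{rj} = dᵣ y_{rj} and direction g'ᵢ⁻ = cᵢ gᵢ⁻, g'ᵣ⁺ = dᵣ gᵣ⁺,
a triple is feasible for the original problem iff it is feasible for the
transformed one, and the infima of the fractional objective (over points with
positive denominator) coincide. -/
theorem stmt3 {n m s : ℕ}
    (x : Fin n → Fin m → ℝ) (y : Fin n → Fin s → ℝ) (o : Fin n)
    (hx : ∀ j i, 0 ≤ x j i) (hy : ∀ j r, 0 ≤ y j r)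
    (L U : ℝ) (hL0 : 0 ≤ L) (hL1 : L ≤ 1) (hU : 1 ≤ U)
    (gm : Fin m → ℝ) (gp : Fin s → ℝ)
    (hgm : ∀ i, 0 ≤ gm i) (hgp : ∀ r, 0 ≤ gp r)
    (c : Fin m → ℝ) (d : Fin s → ℝ) (hc : ∀ i, 0 < c i) (hd : ∀ r, 0 < d r) :
    (∀ (lam : Fin n → ℝ) (tm : Fin m → ℝ) (tp : Fin s → ℝ),
      GDSEFeas x y o L U gm gp (x o) (y o) lam tm tp ↔
      GDSEFeas (fun j i => c i * x j i) (fun j r => d r * y j r) o L U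
        (fun i => c i * gm i) (fun r => d r * gp r)
        (fun i => c i * x o i) (fun r => d r * y o r) lam tm tp) ∧
    sInf (fracVals x y o L U gm gp (x o) (y o)) =
      sInf (fracVals (fun j i => c i * x j i) (fun j r => d r * y j r) o L U
        (fun i => c i * gm i) (fun r => d r * gp r)
        (fun i => c i * x o i) (fun r => d r * y o r)) :=
  stmt3_general x y o L U gm gp c d hc hd
end

section
/- Fix positive constants c_i (i = 1,…,m) and d_r (r = 1,…,s), and define transformed data x'_{ij} = c_i x_{ij}, y'_{rj} = d_r y_{rj} for all j, and the transformed direction g'_i⁻ = c_i g_i⁻, g'_r⁺ = d_r g_r⁺. Then the infimum of the linear objective ℓ over the GDSE feasible set F_o(g) for the original data equals the infimum of ℓ over the GDSE feasible set for the transformed data with direction g' (unit invariance of ρ_o^L). -/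
open Finset

lemma feas_iff {n m s : ℕ}
    (x : Fin n → Fin m → ℝ) (y : Fin n → Fin s → ℝ) (o : Fin n)
    (L U : ℝ) (gm : Fin m → ℝ) (gp : Fin s → ℝ)
    (c : Fin m → ℝ) (d : Fin s → ℝ) (hc : ∀ i, 0 < c i) (hd : ∀ r, 0 < d r)
    (lam : Fin n → ℝ) (tm : Fin m → ℝ) (tp : Fin s → ℝ) :
    GDSEFeas x y o L U gm gp (x o) (y o) lam tm tp ↔
    GDSEFeas (fun j i => c i * x j i) (fun j r => d r * y j r) o L U
      (fun i => c i * gm i) (fun r => d r * gp r)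
      (fun i => c i * x o i) (fun r => d r * y o r) lam tm tp := by
  unfold GDSEFeas
  have h4 : ∀ i : Fin m,
      (∑ j ∈ Finset.univ.erase o, lam j * x j i ≤ x o i + tm i * gm i) ↔
      (∑ j ∈ Finset.univ.erase o, lam j * (c i * x j i) ≤
        c i * x o i + tm i * (c i * gm i)) := by
    intro i
    have : ∑ j ∈ Finset.univ.erase o, lam j * (c i * x j i)
        = c i * ∑ j ∈ Finset.univ.erase o, lam j * x j i := by
      rw [Finset.mul_sum]; congr 1; ext j; ring
    rw [this]
    constructor
    · intro h
      have := mul_le_mul_of_nonneg_left h (hc i).le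
      linarith [this]
    · intro h
      have h' : c i * ∑ j ∈ Finset.univ.erase o, lam j * x j i ≤
          c i * (x o i + tm i * gm i) := by linarith [h]
      exact le_of_mul_le_mul_left h' (hc i)
  have h5 : ∀ r : Fin s,
      (y o r - tp r * gp r ≤ ∑ j ∈ Finset.univ.erase o, lam j * y j r) ↔
      (d r * y o r - tp r * (d r * gp r) ≤
        ∑ j ∈ Finset.univ.erase o, lam j * (d r * y j r)) := by
    intro r
    have : ∑ j ∈ Finset.univ.erase o, lam j * (d r * y j r)
        = d r * ∑ j ∈ Finset.univ.erase o, lam j * y j r := by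
      rw [Finset.mul_sum]; congr 1; ext j; ring
    rw [this]
    constructor
    · intro h
      have := mul_le_mul_of_nonneg_left h (hd r).le
      nlinarith [this]
    · intro h
      have h' : d r * (y o r - tp r * gp r) ≤
          d r * ∑ j ∈ Finset.univ.erase o, lam j * y j r := by nlinarith [h]
      exact le_of_mul_le_mul_left h' (hd r)
  constructor
  · rintro ⟨a, b, cc, e, f, g, h⟩
    exact ⟨a, b, cc, fun i => (h4 i).1 (e i), fun r => (h5 r).1 (f r), g, h⟩
  · rintro ⟨a, b, cc, e, f, g, h⟩
    exact ⟨a, b, cc, fun i => (h4 i).2 (e i), fun r => (h5 r).2 (f r), g, h⟩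

/-- unit invariance of ρ_o^L. With cᵢ, dᵣ > 0 and transformed data
x'_{ij} = cᵢ x_{ij}, y'_{rj} = dᵣ y_{rj} and direction g'ᵢ⁻ = cᵢ gᵢ⁻, g'ᵣ⁺ = dᵣ gᵣ⁺,
the infimum of the linear objective over the original feasible set equals that
over the transformed feasible set. -/
theorem stmt4 {n m s : ℕ}
    (x : Fin n → Fin m → ℝ) (y : Fin n → Fin s → ℝ) (o : Fin n)
    (hx : ∀ j i, 0 ≤ x j i) (hy : ∀ j r, 0 ≤ y j r)
    (L U : ℝ) (hL0 : 0 ≤ L) (hL1 : L ≤ 1) (hU : 1 ≤ U)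
    (gm : Fin m → ℝ) (gp : Fin s → ℝ)
    (hgm : ∀ i, 0 ≤ gm i) (hgp : ∀ r, 0 ≤ gp r)
    (c : Fin m → ℝ) (d : Fin s → ℝ) (hc : ∀ i, 0 < c i) (hd : ∀ r, 0 < d r) :
    sInf (linVals x y o L U gm gp (x o) (y o)) =
      sInf (linVals (fun j i => c i * x j i) (fun j r => d r * y j r) o L U
        (fun i => c i * gm i) (fun r => d r * gp r)
        (fun i => c i * x o i) (fun r => d r * y o r)) := by
  congr 1
  ext w
  simp only [linVals, Set.mem_setOf_eq]
  constructor
  · rintro ⟨lam, tm, tp, hf, hw⟩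
    exact ⟨lam, tm, tp, (feas_iff x y o L U gm gp c d hc hd lam tm tp).1 hf, hw⟩
  · rintro ⟨lam, tm, tp, hf, hw⟩
    exact ⟨lam, tm, tp, (feas_iff x y o L U gm gp c d hc hd lam tm tp).2 hf, hw⟩
end

section
/- Assume variable returns to scale, i.e., L = U = 1. Fix arbitrary real constants a_i (i = 1,…,m) and b_r (r = 1,…,s), define translated data x'_{ij} = x_{ij} + a_i and y'_{rj} = y_{rj} + b_r for all j, and keep the same direction vector g. Then a triple (λ, τ⁻, τ⁺) belongs to the GDSE feasible set F_o(g) for the original data if and only if it belongs to the GDSE feasible set for the translated data; consequently the infimum of the fractional objective f over the feasible points with positive denominator is the same for the original and the translated problems (translation invariance of ρ_o^F under VRS). -/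
open Finset

/-- translation invariance of ρ_o^F under VRS (L = U = 1). With
arbitrary real constants aᵢ, bᵣ and translated data x'_{ij} = x_{ij} + aᵢ,
y'_{rj} = y_{rj} + bᵣ and the same direction, a triple is feasible for the
original problem iff it is feasible for the translated one, and the infima of
the fractional objective (over points with positive denominator) coincide. -/
theorem stmt5 {n m s : ℕ}
    (x : Fin n → Fin m → ℝ) (y : Fin n → Fin s → ℝ) (o : Fin n)
    (gm : Fin m → ℝ) (gp : Fin s → ℝ)
    (hgm : ∀ i, 0 ≤ gm i) (hgp : ∀ r, 0 ≤ gp r)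
    (a : Fin m → ℝ) (b : Fin s → ℝ) :
    (∀ (lam : Fin n → ℝ) (tm : Fin m → ℝ) (tp : Fin s → ℝ),
      GDSEFeas x y o 1 1 gm gp (x o) (y o) lam tm tp ↔
      GDSEFeas (fun j i => x j i + a i) (fun j r => y j r + b r) o 1 1 gm gp
        (fun i => x o i + a i) (fun r => y o r + b r) lam tm tp) ∧
    sInf (fracVals x y o 1 1 gm gp (x o) (y o)) =
      sInf (fracVals (fun j i => x j i + a i) (fun j r => y j r + b r) o 1 1 gm gp
        (fun i => x o i + a i) (fun r => y o r + b r)) := by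

  have key : ∀ (lam : Fin n → ℝ) (tm : Fin m → ℝ) (tp : Fin s → ℝ),
      GDSEFeas x y o 1 1 gm gp (x o) (y o) lam tm tp ↔
      GDSEFeas (fun j i => x j i + a i) (fun j r => y j r + b r) o 1 1 gm gp
        (fun i => x o i + a i) (fun r => y o r + b r) lam tm tp := by
    intro lam tm tp
    constructor
    · rintro ⟨h1, h2, h3, h4, h5, h6, h7⟩
      have hsum : ∑ j ∈ Finset.univ.erase o, lam j = 1 := le_antisymm h7 h6
      refine ⟨h1, h2, h3, ?_, ?_, h6, h7⟩
      · intro i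
        have h : ∑ j ∈ Finset.univ.erase o, lam j * (x j i + a i)
            = (∑ j ∈ Finset.univ.erase o, lam j * x j i) + a i := by
          simp [mul_add, Finset.sum_add_distrib, ← Finset.sum_mul, hsum]
        show ∑ j ∈ Finset.univ.erase o, lam j * (x j i + a i) ≤ (x o i + a i) + tm i * gm i
        rw [h]; linarith [h4 i]
      · intro r
        have h : ∑ j ∈ Finset.univ.erase o, lam j * (y j r + b r)
            = (∑ j ∈ Finset.univ.erase o, lam j * y j r) + b r := by
          simp [mul_add, Finset.sum_add_distrib, ← Finset.sum_mul, hsum]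
        show (y o r + b r) - tp r * gp r ≤ ∑ j ∈ Finset.univ.erase o, lam j * (y j r + b r)
        rw [h]; linarith [h5 r]
    · rintro ⟨h1, h2, h3, h4, h5, h6, h7⟩
      have hsum : ∑ j ∈ Finset.univ.erase o, lam j = 1 := le_antisymm h7 h6
      refine ⟨h1, h2, h3, ?_, ?_, h6, h7⟩
      · intro i
        have h : ∑ j ∈ Finset.univ.erase o, lam j * (x j i + a i)
            = (∑ j ∈ Finset.univ.erase o, lam j * x j i) + a i := by
          simp [mul_add, Finset.sum_add_distrib, ← Finset.sum_mul, hsum]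
        have hx := h4 i
        simp only at hx
        rw [h] at hx
        linarith
      · intro r
        have h : ∑ j ∈ Finset.univ.erase o, lam j * (y j r + b r)
            = (∑ j ∈ Finset.univ.erase o, lam j * y j r) + b r := by
          simp [mul_add, Finset.sum_add_distrib, ← Finset.sum_mul, hsum]
        have hy := h5 r
        simp only at hy
        rw [h] at hy
        linarith
  refine ⟨key, ?_⟩
  congr 1
  ext w
  simp only [fracVals, Set.mem_setOf_eq]
  constructor
  · rintro ⟨lam, tm, tp, hf, hd, hw⟩
    exact ⟨lam, tm, tp, (key _ _ _).mp hf, hd, hw⟩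
  · rintro ⟨lam, tm, tp, hf, hd, hw⟩
    exact ⟨lam, tm, tp, (key _ _ _).mpr hf, hd, hw⟩
end

section
/- Assume variable returns to scale, i.e., L = U = 1. Fix arbitrary real constants a_i (i = 1,…,m) and b_r (r = 1,…,s), define translated data x'_{ij} = x_{ij} + a_i and y'_{rj} = y_{rj} + b_r for all j, and keep the same direction vector g. Then the infimum of the linear objective ℓ over the GDSE feasible set F_o(g) for the original data equals the infimum of ℓ over the GDSE feasible set for the translated data (translation invariance of ρ_o^L under VRS). -/
open Finset

lemma feas_translate {n m s : ℕ} (x : Fin n → Fin m → ℝ) (y : Fin n → Fin s → ℝ)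
    (o : Fin n) (gm : Fin m → ℝ) (gp : Fin s → ℝ) (a : Fin m → ℝ) (b : Fin s → ℝ)
    (lam : Fin n → ℝ) (tm : Fin m → ℝ) (tp : Fin s → ℝ)
    (h : GDSEFeas x y o 1 1 gm gp (x o) (y o) lam tm tp) :
    GDSEFeas (fun j i => x j i + a i) (fun j r => y j r + b r) o 1 1 gm gp
      (fun i => x o i + a i) (fun r => y o r + b r) lam tm tp := by
  obtain ⟨h1, h2, h3, h4, h5, hL, hU⟩ := h
  have hsum : ∑ j ∈ Finset.univ.erase o, lam j = 1 := le_antisymm hU hL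
  refine ⟨h1, h2, h3, ?_, ?_, hL, hU⟩
  · intro i
    dsimp only
    have : ∑ j ∈ Finset.univ.erase o, lam j * (x j i + a i)
        = (∑ j ∈ Finset.univ.erase o, lam j * x j i) + a i := by
      simp [mul_add, Finset.sum_add_distrib, ← Finset.sum_mul, hsum]
    rw [this]
    have := h4 i; linarith
  · intro r
    dsimp only
    have : ∑ j ∈ Finset.univ.erase o, lam j * (y j r + b r)
        = (∑ j ∈ Finset.univ.erase o, lam j * y j r) + b r := by
      simp [mul_add, Finset.sum_add_distrib, ← Finset.sum_mul, hsum]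
    rw [this]
    have := h5 r; linarith

/-- translation invariance of ρ_o^L under VRS (L = U = 1). With
arbitrary real constants aᵢ, bᵣ, translated data x'_{ij} = x_{ij} + aᵢ,
y'_{rj} = y_{rj} + bᵣ and the same direction, the infimum of the linear
objective over the original feasible set equals that over the translated one. -/
theorem stmt6 {n m s : ℕ}
    (x : Fin n → Fin m → ℝ) (y : Fin n → Fin s → ℝ) (o : Fin n)
    (gm : Fin m → ℝ) (gp : Fin s → ℝ)
    (hgm : ∀ i, 0 ≤ gm i) (hgp : ∀ r, 0 ≤ gp r)
    (a : Fin m → ℝ) (b : Fin s → ℝ) :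
    sInf (linVals x y o 1 1 gm gp (x o) (y o)) =
      sInf (linVals (fun j i => x j i + a i) (fun j r => y j r + b r) o 1 1 gm gp
        (fun i => x o i + a i) (fun r => y o r + b r)) := by
  congr 1
  ext w
  constructor
  · rintro ⟨lam, tm, tp, hf, rfl⟩
    exact ⟨lam, tm, tp, feas_translate x y o gm gp a b lam tm tp hf, rfl⟩
  · rintro ⟨lam, tm, tp, hf, rfl⟩
    refine ⟨lam, tm, tp, ?_, rfl⟩
    have := feas_translate (fun j i => x j i + a i) (fun j r => y j r + b r) o gm gp
      (fun i => -a i) (fun r => -b r) lam tm tp hf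
    simpa using this
end

section
/- Assume variable returns to scale, i.e., L = U = 1. Fix positive constants c_i, a_i (i = 1,…,m) and d_r, b_r (r = 1,…,s), define the positive affine transformed data x'_{ij} = c_i x_{ij} + a_i and y'_{rj} = d_r y_{rj} + b_r for all j, and the transformed direction g'_i⁻ = c_i g_i⁻, g'_r⁺ = d_r g_r⁺. Then a triple (λ, τ⁻, τ⁺) belongs to the GDSE feasible set F_o(g) for the original data if and only if it belongs to the GDSE feasible set for the transformed data with direction g'; consequently the infimum of the fractional objective f over the feasible points with positive denominator is the same for both problems (positive affine transformation invariance under VRS). -/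
open Finset

theorem sum_affine {n : ℕ} (o : Fin n) (lam : Fin n → ℝ)
    (hsum : ∑ j ∈ Finset.univ.erase o, lam j = 1) (z : Fin n → ℝ) (c a : ℝ) :
    ∑ j ∈ Finset.univ.erase o, lam j * (c * z j + a)
      = c * (∑ j ∈ Finset.univ.erase o, lam j * z j) + a := by
  have : ∑ j ∈ Finset.univ.erase o, lam j * (c * z j + a)
      = c * (∑ j ∈ Finset.univ.erase o, lam j * z j)
        + a * (∑ j ∈ Finset.univ.erase o, lam j) := by
    rw [Finset.mul_sum, Finset.mul_sum, ← Finset.sum_add_distrib]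
    exact Finset.sum_congr rfl fun j _ => by ring
  rw [this, hsum, mul_one]

theorem stmt7_aux {n m s : ℕ}
    (x : Fin n → Fin m → ℝ) (y : Fin n → Fin s → ℝ) (o : Fin n)
    (gm : Fin m → ℝ) (gp : Fin s → ℝ)
    (c a : Fin m → ℝ) (d b : Fin s → ℝ)
    (hc : ∀ i, 0 < c i) (hd : ∀ r, 0 < d r) :
    ∀ (lam : Fin n → ℝ) (tm : Fin m → ℝ) (tp : Fin s → ℝ),
      GDSEFeas x y o 1 1 gm gp (x o) (y o) lam tm tp ↔
      GDSEFeas (fun j i => c i * x j i + a i) (fun j r => d r * y j r + b r) o 1 1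
        (fun i => c i * gm i) (fun r => d r * gp r)
        (fun i => c i * x o i + a i) (fun r => d r * y o r + b r) lam tm tp := by
  intro lam tm tp
  constructor
  · rintro ⟨h1, h2, h3, h4, h5, h6, h7⟩
    have hsum : ∑ j ∈ Finset.univ.erase o, lam j = 1 := le_antisymm h7 h6
    refine ⟨h1, h2, h3, ?_, ?_, h6, h7⟩
    · intro i
      show ∑ j ∈ Finset.univ.erase o, lam j * (c i * x j i + a i)
          ≤ (c i * x o i + a i) + tm i * (c i * gm i)
      rw [sum_affine o lam hsum (fun j => x j i) (c i) (a i)]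
      nlinarith [h4 i, hc i]
    · intro r
      show (d r * y o r + b r) - tp r * (d r * gp r)
          ≤ ∑ j ∈ Finset.univ.erase o, lam j * (d r * y j r + b r)
      rw [sum_affine o lam hsum (fun j => y j r) (d r) (b r)]
      nlinarith [h5 r, hd r]
  · rintro ⟨h1, h2, h3, h4, h5, h6, h7⟩
    have hsum : ∑ j ∈ Finset.univ.erase o, lam j = 1 := le_antisymm h7 h6
    refine ⟨h1, h2, h3, ?_, ?_, h6, h7⟩
    · intro i
      have h : ∑ j ∈ Finset.univ.erase o, lam j * (c i * x j i + a i)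
          ≤ (c i * x o i + a i) + tm i * (c i * gm i) := h4 i
      rw [sum_affine o lam hsum (fun j => x j i) (c i) (a i)] at h
      have := hc i
      have h' : c i * (∑ j ∈ Finset.univ.erase o, lam j * x j i)
          ≤ c i * (x o i + tm i * gm i) := by nlinarith
      exact le_of_mul_le_mul_left h' this
    · intro r
      have h : (d r * y o r + b r) - tp r * (d r * gp r)
          ≤ ∑ j ∈ Finset.univ.erase o, lam j * (d r * y j r + b r) := h5 r
      rw [sum_affine o lam hsum (fun j => y j r) (d r) (b r)] at h
      have := hd r
      have h' : d r * (y o r - tp r * gp r)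
          ≤ d r * (∑ j ∈ Finset.univ.erase o, lam j * y j r) := by nlinarith
      exact le_of_mul_le_mul_left h' this

/-- positive affine transformation invariance under VRS (L = U = 1).
With cᵢ, aᵢ, dᵣ, bᵣ > 0, transformed data x'_{ij} = cᵢ x_{ij} + aᵢ,
y'_{rj} = dᵣ y_{rj} + bᵣ and direction g'ᵢ⁻ = cᵢ gᵢ⁻, g'ᵣ⁺ = dᵣ gᵣ⁺, a triple is
feasible for the original problem iff it is feasible for the transformed one,
and the infima of the fractional objective (positive denominator) coincide. -/
theorem stmt7 {n m s : ℕ}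
    (x : Fin n → Fin m → ℝ) (y : Fin n → Fin s → ℝ) (o : Fin n)
    (hx : ∀ j i, 0 ≤ x j i) (hy : ∀ j r, 0 ≤ y j r)
    (gm : Fin m → ℝ) (gp : Fin s → ℝ)
    (hgm : ∀ i, 0 ≤ gm i) (hgp : ∀ r, 0 ≤ gp r)
    (c a : Fin m → ℝ) (d b : Fin s → ℝ)
    (hc : ∀ i, 0 < c i) (ha : ∀ i, 0 < a i) (hd : ∀ r, 0 < d r) (hb : ∀ r, 0 < b r) :
    (∀ (lam : Fin n → ℝ) (tm : Fin m → ℝ) (tp : Fin s → ℝ),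
      GDSEFeas x y o 1 1 gm gp (x o) (y o) lam tm tp ↔
      GDSEFeas (fun j i => c i * x j i + a i) (fun j r => d r * y j r + b r) o 1 1
        (fun i => c i * gm i) (fun r => d r * gp r)
        (fun i => c i * x o i + a i) (fun r => d r * y o r + b r) lam tm tp) ∧
    sInf (fracVals x y o 1 1 gm gp (x o) (y o)) =
      sInf (fracVals (fun j i => c i * x j i + a i) (fun j r => d r * y j r + b r) o 1 1
        (fun i => c i * gm i) (fun r => d r * gp r)
        (fun i => c i * x o i + a i) (fun r => d r * y o r + b r)) := by
  have hiff := stmt7_aux x y o gm gp c a d b hc hd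
  refine ⟨hiff, ?_⟩
  congr 1
  ext w
  simp only [fracVals, Set.mem_setOf_eq]
  constructor
  · rintro ⟨lam, tm, tp, hf, hden, hw⟩
    exact ⟨lam, tm, tp, (hiff lam tm tp).mp hf, hden, hw⟩
  · rintro ⟨lam, tm, tp, hf, hden, hw⟩
    exact ⟨lam, tm, tp, (hiff lam tm tp).mpr hf, hden, hw⟩
end

section
/- Assume constant returns to scale and suppose every component of g⁻ is strictly positive. Then the radial input-oriented directional super-efficiency model is feasible — i.e., there exist λ_j ≥ 0 (j ∈ J) and τ ∈ ℝ such that Σ_{j∈J} λ_j x_{ij} ≤ x_{io} + τ g_i⁻ for every i = 1,…,m and Σ_{j∈J} λ_j y_{rj} ≥ y_{ro} for every r = 1,…,s — if and only if Q_o = ∅, where Q_o = { r ∈ {1,…,s} : Σ_{j∈J} y_{rj} = 0 and y_{ro} > 0 }. -/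
open Finset

/-- under CRS with strictly positive g⁻, the radial input-oriented
directional super-efficiency model is feasible iff Q_o = ∅, where
Q_o = { r : Σ_{j∈J} y_{rj} = 0 and y_{ro} > 0 }. -/
theorem stmt8 {n m s : ℕ} (hn : 2 ≤ n)
    (x : Fin n → Fin m → ℝ) (y : Fin n → Fin s → ℝ) (o : Fin n)
    (hx : ∀ j i, 0 ≤ x j i) (hy : ∀ j r, 0 ≤ y j r) (hynz : ∀ j, y j ≠ 0)
    (gm : Fin m → ℝ) (hgm : ∀ i, 0 < gm i) :
    (∃ (lam : Fin n → ℝ) (τ : ℝ),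
      (∀ j ∈ Finset.univ.erase o, 0 ≤ lam j) ∧
      (∀ i, ∑ j ∈ Finset.univ.erase o, lam j * x j i ≤ x o i + τ * gm i) ∧
      (∀ r, y o r ≤ ∑ j ∈ Finset.univ.erase o, lam j * y j r)) ↔
    {r : Fin s | (∑ j ∈ Finset.univ.erase o, y j r) = 0 ∧ 0 < y o r} = ∅ := by
  constructor
  · rintro ⟨lam, τ, hlam, hin, hout⟩
    rw [Set.eq_empty_iff_forall_notMem]
    rintro r ⟨hSr, hpos⟩
    have h0 : ∀ j ∈ Finset.univ.erase o, y j r = 0 :=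
      (Finset.sum_eq_zero_iff_of_nonneg (fun j _ => hy j r)).1 hSr
    have hz : ∑ j ∈ Finset.univ.erase o, lam j * y j r = 0 :=
      Finset.sum_eq_zero fun j hj => by rw [h0 j hj, mul_zero]
    have := hout r
    linarith
  · intro hQ
    have hS : ∀ r, 0 < y o r → 0 < ∑ j ∈ Finset.univ.erase o, y j r := by
      intro r hr
      have hne := Set.eq_empty_iff_forall_notMem.1 hQ r
      have hnn : 0 ≤ ∑ j ∈ Finset.univ.erase o, y j r :=
        Finset.sum_nonneg fun j _ => hy j r
      rcases hnn.lt_or_eq with h | h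
      · exact h
      · exact absurd ⟨h.symm, hr⟩ hne
    obtain ⟨M0, hM0⟩ := Finite.exists_le fun r : Fin s =>
      if 0 < y o r then y o r / ∑ j ∈ Finset.univ.erase o, y j r else 0
    set M := max M0 0 with hM
    have hMnn : 0 ≤ M := le_max_right _ _
    have hout : ∀ r, y o r ≤ ∑ j ∈ Finset.univ.erase o, M * y j r := by
      intro r
      rw [← Finset.mul_sum]
      by_cases hr : 0 < y o r
      · have hSr := hS r hr
        have h1 := hM0 r
        rw [if_pos hr] at h1
        have h2 : y o r / ∑ j ∈ Finset.univ.erase o, y j r ≤ M :=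
          h1.trans (le_max_left _ _)
        exact (div_le_iff₀ hSr).1 h2
      · have hz : y o r = 0 := le_antisymm (not_lt.1 hr) (hy o r)
        rw [hz]
        exact mul_nonneg hMnn (Finset.sum_nonneg fun j _ => hy j r)
    obtain ⟨τ, hτ⟩ := Finite.exists_le fun i : Fin m =>
      ((∑ j ∈ Finset.univ.erase o, M * x j i) - x o i) / gm i
    refine ⟨fun _ => M, τ, fun j _ => hMnn, fun i => ?_, hout⟩
    have h3 := hτ i
    rw [div_le_iff₀ (hgm i)] at h3
    linarith
end

section
/- Assume constant returns to scale and suppose every component of g⁻ is strictly positive. Then the non-radial input-oriented directional super-efficiency model is feasible — i.e., there exist λ_j ≥ 0 (j ∈ J) and τ_i⁻ ≥ 0 (i = 1,…,m) such that Σ_{j∈J} λ_j x_{ij} ≤ x_{io} + τ_i⁻ g_i⁻ for every i = 1,…,m and Σ_{j∈J} λ_j y_{rj} ≥ y_{ro} for every r = 1,…,s — if and only if Q_o = ∅, where Q_o = { r ∈ {1,…,s} : Σ_{j∈J} y_{rj} = 0 and y_{ro} > 0 }. -/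
open Finset

/-- under CRS with strictly positive g⁻, the non-radial
input-oriented directional super-efficiency model is feasible iff Q_o = ∅,
where Q_o = { r : Σ_{j∈J} y_{rj} = 0 and y_{ro} > 0 }. -/
theorem stmt9 {n m s : ℕ} (hn : 2 ≤ n)
    (x : Fin n → Fin m → ℝ) (y : Fin n → Fin s → ℝ) (o : Fin n)
    (hx : ∀ j i, 0 ≤ x j i) (hy : ∀ j r, 0 ≤ y j r) (hynz : ∀ j, y j ≠ 0)
    (gm : Fin m → ℝ) (hgm : ∀ i, 0 < gm i) :
    (∃ (lam : Fin n → ℝ) (tm : Fin m → ℝ),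
      (∀ j ∈ Finset.univ.erase o, 0 ≤ lam j) ∧ (∀ i, 0 ≤ tm i) ∧
      (∀ i, ∑ j ∈ Finset.univ.erase o, lam j * x j i ≤ x o i + tm i * gm i) ∧
      (∀ r, y o r ≤ ∑ j ∈ Finset.univ.erase o, lam j * y j r)) ↔
    {r : Fin s | (∑ j ∈ Finset.univ.erase o, y j r) = 0 ∧ 0 < y o r} = ∅ := by
  constructor
  · rintro ⟨lam, tm, hl, htm, hin, hout⟩
    ext r
    simp only [Set.mem_setOf_eq, Set.mem_empty_iff_false, iff_false, not_and, not_lt]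
    intro hS
    have h0 : ∀ j ∈ Finset.univ.erase o, y j r = 0 := by
      intro j hj
      exact (Finset.sum_eq_zero_iff_of_nonneg (fun j _ => hy j r)).mp hS j hj
    calc y o r ≤ ∑ j ∈ Finset.univ.erase o, lam j * y j r := hout r
      _ = 0 := Finset.sum_eq_zero (fun j hj => by rw [h0 j hj, mul_zero])
  · intro hQ
    set S : Fin s → ℝ := fun r => ∑ j ∈ Finset.univ.erase o, y j r with hSdef
    have hSnn : ∀ r, 0 ≤ S r := fun r => Finset.sum_nonneg (fun j _ => hy j r)
    have hSpos : ∀ r, 0 < y o r → 0 < S r := by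
      intro r hr
      rcases (hSnn r).lt_or_eq with h | h
      · exact h
      · exfalso
        have hmem : r ∈ ({r : Fin s | (∑ j ∈ Finset.univ.erase o, y j r) = 0 ∧ 0 < y o r} : Set (Fin s)) := ⟨h.symm, hr⟩
        rw [hQ] at hmem; exact hmem
    set f : Fin s → ℝ := fun r => if 0 < S r then y o r / S r else 0 with hfdef
    have hfnn : ∀ r, 0 ≤ f r := by
      intro r; simp only [hfdef]
      split
      · exact div_nonneg (hy o r) (le_of_lt ‹_›)
      · exact le_refl 0
    set t : ℝ := ∑ r, f r with htdef
    have htnn : 0 ≤ t := Finset.sum_nonneg fun r _ => hfnn r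
    have htge : ∀ r, f r ≤ t :=
      fun r => Finset.single_le_sum (fun r _ => hfnn r) (Finset.mem_univ r)
    refine ⟨fun _ => t, fun i => t * (∑ j ∈ Finset.univ.erase o, x j i) / gm i,
      fun j _ => htnn, ?_, ?_, ?_⟩
    · intro i
      exact div_nonneg (mul_nonneg htnn (Finset.sum_nonneg fun j _ => hx j i)) (hgm i).le
    · intro i
      rw [div_mul_cancel₀ _ (hgm i).ne', ← Finset.mul_sum]
      have := hx o i
      linarith
    · intro r
      rw [← Finset.mul_sum]
      by_cases hr : 0 < y o r
      · have hSr := hSpos r hr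
        have hfr : f r = y o r / S r := by simp [hfdef, hSr]
        calc y o r = (y o r / S r) * S r := by field_simp
          _ ≤ t * S r := mul_le_mul_of_nonneg_right (hfr ▸ htge r) hSr.le
      · have h0 : y o r = 0 := le_antisymm (not_lt.mp hr) (hy o r)
        rw [h0]; exact mul_nonneg htnn (hSnn r)
end

section
/- If the GDSE feasible set F_o(g) is nonempty, then for every output index r with Σ_{j∈J} y_{rj} = 0 and y_{ro} > 0 one must have g_r⁺ > 0 (necessary condition on the direction vector for feasibility). -/
open Finset

/-- if the GDSE feasible set F_o(g) is nonempty, then for every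
output index r with Σ_{j∈J} y_{rj} = 0 and y_{ro} > 0 one must have gᵣ⁺ > 0. -/
theorem stmt10 {n m s : ℕ}
    (x : Fin n → Fin m → ℝ) (y : Fin n → Fin s → ℝ) (o : Fin n)
    (hx : ∀ j i, 0 ≤ x j i) (hy : ∀ j r, 0 ≤ y j r)
    (L U : ℝ) (hL0 : 0 ≤ L) (hL1 : L ≤ 1) (hU : 1 ≤ U)
    (gm : Fin m → ℝ) (gp : Fin s → ℝ)
    (hgm : ∀ i, 0 ≤ gm i) (hgp : ∀ r, 0 ≤ gp r)
    (hne : ∃ (lam : Fin n → ℝ) (tm : Fin m → ℝ) (tp : Fin s → ℝ),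
      GDSEFeas x y o L U gm gp (x o) (y o) lam tm tp) :
    ∀ r : Fin s, (∑ j ∈ Finset.univ.erase o, y j r) = 0 → 0 < y o r → 0 < gp r := by
  
  intro r hsum hpos
  obtain ⟨lam, tm, tp, ⟨hlam, htm, htp, hin, hout, hLb, hUb⟩⟩ := hne
  have hzero : ∀ j ∈ Finset.univ.erase o, y j r = 0 := by
    intro j hj
    have := (Finset.sum_eq_zero_iff_of_nonneg (fun j _ => hy j r)).mp hsum j hj
    exact this
  have hsum0 : ∑ j ∈ Finset.univ.erase o, lam j * y j r = 0 := by
    apply Finset.sum_eq_zero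
    intro j hj; rw [hzero j hj, mul_zero]
  have h := hout r
  rw [hsum0] at h
  have h2 : y o r ≤ tp r * gp r := by linarith
  by_contra hg
  push_neg at hg
  have : gp r = 0 := le_antisymm hg (hgp r)
  rw [this, mul_zero] at h2
  linarith
end

section
/- Suppose L > 0. If the GDSE feasible set F_o(g) is nonempty, then for every input index i with x_{io} = 0 and x_{ij} > 0 for all j ∈ J one must have g_i⁻ > 0 (necessary condition on the direction vector for feasibility). -/
open Finset

/-- suppose L > 0. If the GDSE feasible set F_o(g) is nonempty,
then for every input index i with x_{io} = 0 and x_{ij} > 0 for all j ∈ J one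
must have gᵢ⁻ > 0. -/
theorem stmt11 {n m s : ℕ}
    (x : Fin n → Fin m → ℝ) (y : Fin n → Fin s → ℝ) (o : Fin n)
    (hx : ∀ j i, 0 ≤ x j i) (hy : ∀ j r, 0 ≤ y j r)
    (L U : ℝ) (hL0 : 0 < L) (hL1 : L ≤ 1) (hU : 1 ≤ U)
    (gm : Fin m → ℝ) (gp : Fin s → ℝ)
    (hgm : ∀ i, 0 ≤ gm i) (hgp : ∀ r, 0 ≤ gp r)
    (hne : ∃ (lam : Fin n → ℝ) (tm : Fin m → ℝ) (tp : Fin s → ℝ),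
      GDSEFeas x y o L U gm gp (x o) (y o) lam tm tp) :
    ∀ i : Fin m, x o i = 0 → (∀ j ∈ Finset.univ.erase o, 0 < x j i) → 0 < gm i := by
  intro i hxo hxj
  rcases hne with ⟨lam, tm, tp, hlam, htm, htp, hin, hout, hLs, hUs⟩
  by_contra hg
  have hgi : gm i = 0 := le_antisymm (not_lt.mp hg) (hgm i)
  have h1 := hin i
  rw [hxo, hgi, mul_zero, zero_add] at h1
  -- sum λ_j > 0 since sum ≥ L > 0, so ∃ j with λ_j > 0
  have hpos : ∃ j ∈ Finset.univ.erase o, 0 < lam j := by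
    by_contra h
    push_neg at h
    have : ∑ j ∈ Finset.univ.erase o, lam j ≤ 0 :=
      Finset.sum_nonpos fun j hj => h j hj
    linarith
  rcases hpos with ⟨j, hj, hlj⟩
  have hle : lam j * x j i ≤ ∑ k ∈ Finset.univ.erase o, lam k * x k i :=
    Finset.single_le_sum (fun k hk => mul_nonneg (hlam k hk) (hx k i)) hj
  have : 0 < lam j * x j i := mul_pos hlj (hxj j hj)
  linarith
end

section
/- Let (λ*, τ⁻*, τ⁺*) ∈ F_o(g) minimize the linear objective ℓ over F_o(g). Then any constraint whose adjustment factor is positive is binding at the optimum: for every input index i with g_i⁻ > 0 and τ_i⁻* > 0 one has Σ_{j∈J} λ*_j x_{ij} = x_{io} + τ_i⁻* g_i⁻, and for every output index r with g_r⁺ > 0 and τ_r⁺* > 0 one has Σ_{j∈J} λ*_j y_{rj} = y_{ro} − τ_r⁺* g_r⁺. -/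
open Finset

/-- at a minimizer of the linear objective over F_o(g), every
constraint whose adjustment factor is positive (and whose direction component
is positive) is binding. -/
theorem stmt12 {n m s : ℕ}
    (x : Fin n → Fin m → ℝ) (y : Fin n → Fin s → ℝ) (o : Fin n)
    (hx : ∀ j i, 0 ≤ x j i) (hy : ∀ j r, 0 ≤ y j r)
    (L U : ℝ) (hL0 : 0 ≤ L) (hL1 : L ≤ 1) (hU : 1 ≤ U)
    (gm : Fin m → ℝ) (gp : Fin s → ℝ)
    (hgm : ∀ i, 0 ≤ gm i) (hgp : ∀ r, 0 ≤ gp r)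
    (lam : Fin n → ℝ) (tm : Fin m → ℝ) (tp : Fin s → ℝ)
    (hfeas : GDSEFeas x y o L U gm gp (x o) (y o) lam tm tp)
    (hopt : ∀ (lam' : Fin n → ℝ) (tm' : Fin m → ℝ) (tp' : Fin s → ℝ),
      GDSEFeas x y o L U gm gp (x o) (y o) lam' tm' tp' →
      linObj m s tm tp ≤ linObj m s tm' tp') :
    (∀ i : Fin m, 0 < gm i → 0 < tm i →
      ∑ j ∈ Finset.univ.erase o, lam j * x j i = x o i + tm i * gm i) ∧
    (∀ r : Fin s, 0 < gp r → 0 < tp r →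
      ∑ j ∈ Finset.univ.erase o, lam j * y j r = y o r - tp r * gp r) := by
  obtain ⟨hlam, htm0, htp0, hin, hout, hLlo, hUhi⟩ := hfeas
  constructor
  · intro i hgi hti
    by_contra hne
    have hlt : ∑ j ∈ Finset.univ.erase o, lam j * x j i < x o i + tm i * gm i :=
      lt_of_le_of_ne (hin i) hne
    set δ : ℝ := min (tm i) ((x o i + tm i * gm i - ∑ j ∈ Finset.univ.erase o, lam j * x j i) / gm i) with hδ
    have hδpos : 0 < δ := lt_min hti (div_pos (by linarith) hgi)
    have hδ1 : δ ≤ tm i := min_le_left _ _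
    have hδ2 : δ * gm i ≤ x o i + tm i * gm i - ∑ j ∈ Finset.univ.erase o, lam j * x j i := by
      have := min_le_right (tm i) ((x o i + tm i * gm i - ∑ j ∈ Finset.univ.erase o, lam j * x j i) / gm i)
      calc δ * gm i ≤ ((x o i + tm i * gm i - ∑ j ∈ Finset.univ.erase o, lam j * x j i) / gm i) * gm i :=
            mul_le_mul_of_nonneg_right this hgi.le
        _ = _ := div_mul_cancel₀ _ hgi.ne'
    set tm' : Fin m → ℝ := Function.update tm i (tm i - δ) with htm'
    have hfeas' : GDSEFeas x y o L U gm gp (x o) (y o) lam tm' tp := by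
      refine ⟨hlam, ?_, htp0, ?_, hout, hLlo, hUhi⟩
      · intro k
        rcases eq_or_ne k i with rfl | hk
        · simp [htm', Function.update_self]; linarith
        · simpa [htm', Function.update_of_ne hk] using htm0 k
      · intro k
        rcases eq_or_ne k i with rfl | hk
        · simp only [htm', Function.update_self]
          nlinarith
        · simpa [htm', Function.update_of_ne hk] using hin k
    have hsum : ∑ k, tm' k = (∑ k, tm k) - δ := by
      rw [htm', Finset.sum_update_of_mem (Finset.mem_univ i)]
      rw [Finset.sdiff_singleton_eq_erase, ← Finset.sum_erase_add _ tm (Finset.mem_univ i)]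
      ring
    have hm : (0:ℝ) < m := by exact_mod_cast i.pos
    have : linObj m s tm' tp < linObj m s tm tp := by
      unfold linObj
      rw [hsum]
      have : (1 / (m:ℝ)) * δ > 0 := by positivity
      linarith
    exact absurd (hopt lam tm' tp hfeas') (not_le.mpr this)
  · intro r hgr htr
    by_contra hne
    have hlt : y o r - tp r * gp r < ∑ j ∈ Finset.univ.erase o, lam j * y j r :=
      lt_of_le_of_ne (hout r) (by simpa [eq_comm] using hne)
    set δ : ℝ := min (tp r) ((∑ j ∈ Finset.univ.erase o, lam j * y j r - (y o r - tp r * gp r)) / gp r) with hδ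
    have hδpos : 0 < δ := lt_min htr (div_pos (by linarith) hgr)
    have hδ1 : δ ≤ tp r := min_le_left _ _
    have hδ2 : δ * gp r ≤ ∑ j ∈ Finset.univ.erase o, lam j * y j r - (y o r - tp r * gp r) := by
      have := min_le_right (tp r) ((∑ j ∈ Finset.univ.erase o, lam j * y j r - (y o r - tp r * gp r)) / gp r)
      calc δ * gp r ≤ ((∑ j ∈ Finset.univ.erase o, lam j * y j r - (y o r - tp r * gp r)) / gp r) * gp r :=
            mul_le_mul_of_nonneg_right this hgr.le
        _ = _ := div_mul_cancel₀ _ hgr.ne'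
    set tp' : Fin s → ℝ := Function.update tp r (tp r - δ) with htp'
    have hfeas' : GDSEFeas x y o L U gm gp (x o) (y o) lam tm tp' := by
      refine ⟨hlam, htm0, ?_, hin, ?_, hLlo, hUhi⟩
      · intro k
        rcases eq_or_ne k r with rfl | hk
        · simp [htp', Function.update_self]; linarith
        · simpa [htp', Function.update_of_ne hk] using htp0 k
      · intro k
        rcases eq_or_ne k r with rfl | hk
        · simp only [htp', Function.update_self]
          nlinarith
        · simpa [htp', Function.update_of_ne hk] using hout k
    have hsum : ∑ k, tp' k = (∑ k, tp k) - δ := by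
      rw [htp', Finset.sum_update_of_mem (Finset.mem_univ r)]
      rw [Finset.sdiff_singleton_eq_erase, ← Finset.sum_erase_add _ tp (Finset.mem_univ r)]
      ring
    have hs : (0:ℝ) < s := by exact_mod_cast r.pos
    have : linObj m s tm tp' < linObj m s tm tp := by
      unfold linObj
      rw [hsum]
      have : (1 / (s:ℝ)) * δ > 0 := by positivity
      linarith
    exact absurd (hopt lam tm tp' hfeas') (not_le.mpr this)
end

section
/- Suppose g_r⁺ > 0 for every r = 1,…,s, and let (λ*, τ⁻*, τ⁺*) ∈ F_o(g) minimize the linear objective ℓ over F_o(g). Then the projected outputs are nonnegative: y_{ro} − τ_r⁺* g_r⁺ ≥ 0 for every r = 1,…,s. -/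
open Finset

/-- if gᵣ⁺ > 0 for every r and (λ*, τ⁻*, τ⁺*) minimizes the linear
objective over F_o(g), then the projected outputs are nonnegative:
y_{ro} - τᵣ⁺* gᵣ⁺ ≥ 0 for every r. -/
theorem stmt13 {n m s : ℕ}
    (x : Fin n → Fin m → ℝ) (y : Fin n → Fin s → ℝ) (o : Fin n)
    (hx : ∀ j i, 0 ≤ x j i) (hy : ∀ j r, 0 ≤ y j r)
    (L U : ℝ) (hL0 : 0 ≤ L) (hL1 : L ≤ 1) (hU : 1 ≤ U)
    (gm : Fin m → ℝ) (gp : Fin s → ℝ)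
    (hgm : ∀ i, 0 ≤ gm i) (hgp : ∀ r, 0 < gp r)
    (lam : Fin n → ℝ) (tm : Fin m → ℝ) (tp : Fin s → ℝ)
    (hfeas : GDSEFeas x y o L U gm gp (x o) (y o) lam tm tp)
    (hopt : ∀ (lam' : Fin n → ℝ) (tm' : Fin m → ℝ) (tp' : Fin s → ℝ),
      GDSEFeas x y o L U gm gp (x o) (y o) lam' tm' tp' →
      linObj m s tm tp ≤ linObj m s tm' tp') :
    ∀ r : Fin s, 0 ≤ y o r - tp r * gp r := by
  intro r
  by_contra hneg
  push_neg at hneg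
  -- shrink tp at r
  set t' : Fin s → ℝ := Function.update tp r (y o r / gp r) with ht'
  have hgpr := hgp r
  have ht'r : t' r = y o r / gp r := Function.update_self _ _ _
  have hlt : t' r < tp r := by
    rw [ht'r, div_lt_iff₀ hgpr]
    linarith
  obtain ⟨hlam, htm, htp, hin, hout, hLb, hUb⟩ := hfeas
  have hfeas' : GDSEFeas x y o L U gm gp (x o) (y o) lam tm t' := by
    refine ⟨hlam, htm, ?_, hin, ?_, hLb, hUb⟩
    · intro i
      by_cases hi : i = r
      · subst hi; rw [ht'r]; exact div_nonneg (hy o i) hgpr.le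
      · simp only [ht', Function.update_of_ne hi]; exact htp i
    · intro i
      by_cases hi : i = r
      · subst hi
        rw [ht'r, div_mul_cancel₀ _ (ne_of_gt hgpr)]
        simp only [sub_self]
        exact Finset.sum_nonneg fun j hj => mul_nonneg (hlam j hj) (hy j i)
      · simp only [ht', Function.update_of_ne hi]; exact hout i
  have hsum : ∑ i, t' i < ∑ i, tp i := by
    apply Finset.sum_lt_sum
    · intro i _
      by_cases hi : i = r
      · subst hi; exact le_of_lt hlt
      · simp only [ht', Function.update_of_ne hi]; exact le_rfl
    · exact ⟨r, Finset.mem_univ r, hlt⟩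
  have hs : (0:ℝ) < 1 / (s : ℝ) := by
    have : 0 < s := Fin.pos r
    positivity
  have : linObj m s tm t' < linObj m s tm tp := by
    unfold linObj
    have := mul_lt_mul_of_pos_left hsum hs
    linarith
  exact absurd (hopt lam tm t' hfeas') (not_le.mpr this)
end

section
/- Assume variable returns to scale, i.e., L = U = 1, and suppose g_r⁺ > 0 for every r = 1,…,s. Let (λ*, τ⁻*, τ⁺*) ∈ F_o(g) minimize the linear objective ℓ over F_o(g). Then for every output index r with τ_r⁺* > 0 one has τ_r⁺* g_r⁺ ≤ y_{ro} − min_{j∈J} y_{rj}, i.e., τ_r⁺* ≤ (y_{ro} − min_{j∈J} y_{rj})/g_r⁺. -/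
open Finset

/-- under VRS (L = U = 1) with gᵣ⁺ > 0 for every r, at a minimizer
of the linear objective over F_o(g), for every output index r with τᵣ⁺* > 0 one
has τᵣ⁺* gᵣ⁺ ≤ y_{ro} - min_{j∈J} y_{rj}, i.e. τᵣ⁺* ≤ (y_{ro} - min_{j∈J} y_{rj})/gᵣ⁺. -/
theorem stmt16 {n m s : ℕ} (hn : 2 ≤ n)
    (x : Fin n → Fin m → ℝ) (y : Fin n → Fin s → ℝ) (o : Fin n)
    (hJ : (Finset.univ.erase o : Finset (Fin n)).Nonempty)
    (hx : ∀ j i, 0 ≤ x j i) (hy : ∀ j r, 0 ≤ y j r)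
    (gm : Fin m → ℝ) (gp : Fin s → ℝ)
    (hgm : ∀ i, 0 ≤ gm i) (hgp : ∀ r, 0 < gp r)
    (lam : Fin n → ℝ) (tm : Fin m → ℝ) (tp : Fin s → ℝ)
    (hfeas : GDSEFeas x y o 1 1 gm gp (x o) (y o) lam tm tp)
    (hopt : ∀ (lam' : Fin n → ℝ) (tm' : Fin m → ℝ) (tp' : Fin s → ℝ),
      GDSEFeas x y o 1 1 gm gp (x o) (y o) lam' tm' tp' →
      linObj m s tm tp ≤ linObj m s tm' tp') :
    ∀ r : Fin s, 0 < tp r →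
      tp r * gp r ≤ y o r - (Finset.univ.erase o).inf' hJ (fun j => y j r) ∧
      tp r ≤ (y o r - (Finset.univ.erase o).inf' hJ (fun j => y j r)) / gp r := by
  intro r hr
  set M := (Finset.univ.erase o).inf' hJ (fun j => y j r) with hM
  obtain ⟨hlam, htm, htp, hin, hout, hL, hU⟩ := hfeas
  have hsum1 : ∑ j ∈ Finset.univ.erase o, lam j = 1 := le_antisymm hU hL
  have hMle : M ≤ ∑ j ∈ Finset.univ.erase o, lam j * y j r := by
    calc M = ∑ j ∈ Finset.univ.erase o, lam j * M := by
            rw [← Finset.sum_mul, hsum1, one_mul]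
      _ ≤ ∑ j ∈ Finset.univ.erase o, lam j * y j r :=
          Finset.sum_le_sum fun j hj =>
            mul_le_mul_of_nonneg_left (Finset.inf'_le _ hj) (hlam j hj)
  set c := max 0 ((y o r - M) / gp r) with hc
  have hcfeas : GDSEFeas x y o 1 1 gm gp (x o) (y o) lam tm (Function.update tp r c) := by
    refine ⟨hlam, htm, ?_, hin, ?_, hL, hU⟩
    · intro r'
      rcases eq_or_ne r' r with rfl | h
      · simp [hc]
      · rw [Function.update_of_ne h]; exact htp r'
    · intro r'
      rcases eq_or_ne r' r with rfl | h
      · rw [Function.update_self]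
        have h1 : (y o r' - M) / gp r' ≤ c := le_max_right _ _
        have h2 : y o r' - M ≤ c * gp r' := (div_le_iff₀ (hgp r')).mp h1
        linarith
      · rw [Function.update_of_ne h]; exact hout r'
  have hle := hopt lam tm (Function.update tp r c) hcfeas
  have hs : (0 : ℝ) < (s : ℝ) := by exact_mod_cast r.pos
  have hsum' : ∑ r' : Fin s, Function.update tp r c r' =
      c + ∑ r' ∈ Finset.univ.erase r, tp r' := by
    rw [Finset.sum_update_of_mem (Finset.mem_univ r), Finset.sdiff_singleton_eq_erase]
  have hsum : ∑ r' : Fin s, tp r' = tp r + ∑ r' ∈ Finset.univ.erase r, tp r' :=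
    (Finset.add_sum_erase _ _ (Finset.mem_univ r)).symm
  have hkey : tp r ≤ c := by
    unfold linObj at hle
    rw [hsum', hsum] at hle
    have h1s : 0 < 1 / (s : ℝ) := by positivity
    nlinarith
  have hq : tp r ≤ (y o r - M) / gp r := by
    rcases max_cases 0 ((y o r - M) / gp r) with ⟨h1, h2⟩ | ⟨h1, h2⟩
    · exfalso; rw [hc, h1] at hkey; linarith
    · rwa [hc, h1] at hkey
  refine ⟨?_, hq⟩
  have := (le_div_iff₀ (hgp r)).mp hq
  linarith
end

section
/- Suppose the direction vector g = (g⁻, g⁺) has all components strictly positive, n ≥ 2, and 0 ≤ L ≤ 1 ≤ U. Then the Linear HDSE (hybrid) model is feasible: there exist λ_j ≥ 0 (j ∈ J), scalars τ⁻ ≥ 0 and τ⁺ ≥ 0, and τ_i⁻ ≥ 0 (i = m₁+1,…,m), τ_r⁺ ≥ 0 (r = s₁+1,…,s) such that Σ_{j∈J} λ_j x_{ij} ≤ x_{io} + τ⁻ g_i⁻ for i = 1,…,m₁, Σ_{j∈J} λ_j x_{ij} ≤ x_{io} + τ_i⁻ g_i⁻ for i = m₁+1,…,m, Σ_{j∈J}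 λ_j y_{rj} ≥ y_{ro} − τ⁺ g_r⁺ for r = 1,…,s₁, Σ_{j∈J} λ_j y_{rj} ≥ y_{ro} − τ_r⁺ g_r⁺ for r = s₁+1,…,s, and L ≤ Σ_{j∈J} λ_j ≤ U. -/
open Finset

/-- with all direction components strictly positive, n ≥ 2 and
0 ≤ L ≤ 1 ≤ U, the Linear HDSE (hybrid) model is feasible: the first m₁ inputs
are expanded radially with a common factor τ⁻, the rest non-radially; the first
s₁ outputs are contracted radially with a common factor τ⁺, the rest
non-radially. -/
theorem stmt17 {n m s : ℕ} (hn : 2 ≤ n) (m₁ s₁ : ℕ) (hm₁ : m₁ ≤ m) (hs₁ : s₁ ≤ s)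
    (x : Fin n → Fin m → ℝ) (y : Fin n → Fin s → ℝ) (o : Fin n)
    (hx : ∀ j i, 0 ≤ x j i) (hy : ∀ j r, 0 ≤ y j r)
    (L U : ℝ) (hL0 : 0 ≤ L) (hL1 : L ≤ 1) (hU : 1 ≤ U)
    (gm : Fin m → ℝ) (gp : Fin s → ℝ)
    (hgm : ∀ i, 0 < gm i) (hgp : ∀ r, 0 < gp r) :
    ∃ (lam : Fin n → ℝ) (tmr : ℝ) (tm : Fin m → ℝ) (tpr : ℝ) (tp : Fin s → ℝ),
      (∀ j ∈ Finset.univ.erase o, 0 ≤ lam j) ∧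
      0 ≤ tmr ∧ (∀ i, 0 ≤ tm i) ∧ 0 ≤ tpr ∧ (∀ r, 0 ≤ tp r) ∧
      (∀ i : Fin m, (i : ℕ) < m₁ →
        ∑ j ∈ Finset.univ.erase o, lam j * x j i ≤ x o i + tmr * gm i) ∧
      (∀ i : Fin m, m₁ ≤ (i : ℕ) →
        ∑ j ∈ Finset.univ.erase o, lam j * x j i ≤ x o i + tm i * gm i) ∧
      (∀ r : Fin s, (r : ℕ) < s₁ →
        y o r - tpr * gp r ≤ ∑ j ∈ Finset.univ.erase o, lam j * y j r) ∧
      (∀ r : Fin s, s₁ ≤ (r : ℕ) →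
        y o r - tp r * gp r ≤ ∑ j ∈ Finset.univ.erase o, lam j * y j r) ∧
      L ≤ ∑ j ∈ Finset.univ.erase o, lam j ∧
      ∑ j ∈ Finset.univ.erase o, lam j ≤ U := by
  obtain ⟨j₀, hj₀⟩ : ∃ j₀ : Fin n, j₀ ≠ o := by
    haveI : Nontrivial (Fin n) := Fin.nontrivial_iff_two_le.mpr hn
    exact exists_ne o
  have hmem : j₀ ∈ Finset.univ.erase o := Finset.mem_erase.2 ⟨hj₀, Finset.mem_univ _⟩
  refine ⟨fun j => if j = j₀ then 1 else 0,
    ∑ i, x j₀ i / gm i, fun i => x j₀ i / gm i,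
    ∑ r, y o r / gp r, fun r => y o r / gp r, ?_, ?_, ?_, ?_, ?_, ?_, ?_, ?_, ?_, ?_, ?_⟩
  · intro j _; positivity
  · exact Finset.sum_nonneg fun i _ => div_nonneg (hx j₀ i) (hgm i).le
  · intro i; exact div_nonneg (hx j₀ i) (hgm i).le
  · exact Finset.sum_nonneg fun r _ => div_nonneg (hy o r) (hgp r).le
  · intro r; exact div_nonneg (hy o r) (hgp r).le
  all_goals
    have hsum : ∀ (f : Fin n → ℝ),
        ∑ j ∈ Finset.univ.erase o, (if j = j₀ then (1:ℝ) else 0) * f j = f j₀ := by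
      intro f
      rw [Finset.sum_eq_single j₀]
      · simp
      · intro b _ hb; simp [hb]
      · intro h; exact absurd hmem h
  · intro i hi
    rw [hsum (fun j => x j i)]
    have h1 : x j₀ i / gm i * gm i = x j₀ i := div_mul_cancel₀ _ (hgm i).ne'
    have h2 : x j₀ i / gm i ≤ ∑ k, x j₀ k / gm k :=
      Finset.single_le_sum (f := fun k => x j₀ k / gm k)
        (fun k _ => div_nonneg (hx j₀ k) (hgm k).le) (Finset.mem_univ i)
    nlinarith [hx o i, (hgm i).le]
  · intro i _
    rw [hsum (fun j => x j i)]
    have h1 : x j₀ i / gm i * gm i = x j₀ i := div_mul_cancel₀ _ (hgm i).ne'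
    nlinarith [hx o i]
  · intro r hr
    rw [hsum (fun j => y j r)]
    have h1 : y o r / gp r * gp r = y o r := div_mul_cancel₀ _ (hgp r).ne'
    have h2 : y o r / gp r ≤ ∑ k, y o k / gp k :=
      Finset.single_le_sum (f := fun k => y o k / gp k)
        (fun k _ => div_nonneg (hy o k) (hgp k).le) (Finset.mem_univ r)
    nlinarith [hy j₀ r, (hgp r).le]
  · intro r _
    rw [hsum (fun j => y j r)]
    have h1 : y o r / gp r * gp r = y o r := div_mul_cancel₀ _ (hgp r).ne'
    nlinarith [hy j₀ r]
  · have := hsum (fun _ => (1:ℝ))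
    simp only [mul_one] at this
    rw [this]; exact hL1
  · have := hsum (fun _ => (1:ℝ))
    simp only [mul_one] at this
    rw [this]; exact hU
end
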